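/- For a formal power series A(x) with zero constant term and A'(0)=1, setting B(x) to be the compositional inverse of x/(1+A(x)), one has B(x) = A(x) if and only if A(A(x)) = (A(x) - x)/x. -/

import Mathlib

/-!
Composing `x / (1 + A) = X * (1 + A)⁻¹` with `B` and using that substitution is multiplicative
turns `(x / (1 + A)) ∘ B = x` into `B = x * (1 + A ∘ B)`. The equation `C = x * (1 + A ∘ C)`
has at most one solution, because the coefficient of `x ^ (n + 1)` on the right only involves
the coefficients of `C` up to `x ^ n`; and `A` solves it exactly when `x * A ∘ A = A - x`.
-/

/-- Composition `f ∘ g` (i.e. `f(g(x))`) of formal power series, valid when `g`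
has zero constant term. -/
noncomputable def psComp {R : Type*} [CommSemiring R] (f g : PowerSeries R) : PowerSeries R :=
  PowerSeries.mk fun n =>
    ∑ k ∈ Finset.range (n + 1), PowerSeries.coeff k f * PowerSeries.coeff n (g ^ k)

open PowerSeries Finset

section psComp

variable {R : Type*}

theorem coeff_psComp [CommSemiring R] (f g : R⟦X⟧) (n : ℕ) :
    coeff n (psComp f g) = ∑ k ∈ range (n + 1), coeff k f * coeff n (g ^ k) :=
  coeff_mk _ _

theorem coeff_pow_eq_zero_of_lt [CommSemiring R] {g : R⟦X⟧} (hg : constantCoeff g = 0)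
    {n k : ℕ} (h : n < k) : coeff n (g ^ k) = 0 :=
  coeff_of_lt_order n <| (Nat.cast_lt.mpr h).trans_le (le_order_pow_of_constantCoeff_eq_zero k hg)

theorem constantCoeff_psComp [CommSemiring R] (f g : R⟦X⟧) :
    constantCoeff (psComp f g) = constantCoeff f := by
  simpa using coeff_psComp f g 0

theorem coeff_psComp_congr [CommSemiring R] (f : R⟦X⟧) {g h : R⟦X⟧} {n : ℕ}
    (hgh : ∀ m ≤ n, coeff m g = coeff m h) :
    coeff n (psComp f g) = coeff n (psComp f h) := by
  have htrunc : trunc (n + 1) g = trunc (n + 1) h := by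
    ext m
    simp only [coeff_trunc]
    split_ifs with hm
    exacts [hgh m (Nat.lt_succ_iff.mp hm), rfl]
  have hpow (k : ℕ) : coeff n (g ^ k) = coeff n (h ^ k) := by
    rw [← coeff_coe_trunc_of_lt n.lt_succ_self, ← trunc_trunc_pow, htrunc, trunc_trunc_pow,
      coeff_coe_trunc_of_lt n.lt_succ_self]
  simp only [coeff_psComp, hpow]

theorem psComp_eq_subst [CommRing R] (f : R⟦X⟧) {g : R⟦X⟧} (hg : constantCoeff g = 0) :
    psComp f g = f.subst g := by
  ext n
  rw [coeff_psComp, coeff_subst' (HasSubst.of_constantCoeff_zero' hg)]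
  refine (finsum_eq_sum_of_support_subset _ fun k hk => mem_range.mpr ?_).symm
  exact Nat.lt_succ_of_le <| not_lt.mp fun hnk => hk (by simp [coeff_pow_eq_zero_of_lt hg hnk])

theorem eq_of_eq_X_mul_psComp [CommSemiring R] {f C D : R⟦X⟧}
    (hC : C = X * psComp f C) (hD : D = X * psComp f D) : C = D := by
  ext n
  induction n using Nat.strong_induction_on with
  | _ n ih =>
    cases n with
    | zero => rw [hC, hD]; simp
    | succ n =>
      rw [hC, hD, coeff_succ_X_mul, coeff_succ_X_mul]
      exact coeff_psComp_congr f fun m hm => ih m (Nat.lt_succ_of_le hm)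

theorem X_mul_psComp_eq_of_psComp_X_mul_inv_eq_X {k : Type*} [Field k] {u C : k⟦X⟧}
    (hu : constantCoeff u ≠ 0) (hC : constantCoeff C = 0) (h : psComp (X * u⁻¹) C = X) :
    X * psComp u C = C := by
  have hC' := HasSubst.of_constantCoeff_zero' hC
  calc X * psComp u C = psComp (X * u⁻¹) C * psComp u C := by rw [h]
    _ = psComp (X * u⁻¹ * u) C := by simp only [psComp_eq_subst _ hC, subst_mul hC']
    _ = C := by rw [mul_assoc, PowerSeries.inv_mul_cancel u hu, mul_one, psComp_eq_subst _ hC,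
        subst_X hC']

end psComp

theorem revertReciprocal_fixed_iff_eigenseries_general (A B : PowerSeries ℚ)
    (h0 : PowerSeries.constantCoeff A = 0)
    (hBl : psComp B (PowerSeries.X * (1 + A)⁻¹) = PowerSeries.X)
    (hBr : psComp (PowerSeries.X * (1 + A)⁻¹) B = PowerSeries.X) :
    B = A ↔ PowerSeries.X * psComp A A = A - PowerSeries.X := by
  have h1A : constantCoeff (1 + A) ≠ 0 := by simp [h0]
  have hB0 : constantCoeff B = 0 := by
    simpa [constantCoeff_psComp] using congrArg constantCoeff hBl
  have hB : B = X * psComp (1 + A) B :=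
    (X_mul_psComp_eq_of_psComp_X_mul_inv_eq_X h1A hB0 hBr).symm
  have hA : A = X * psComp (1 + A) A ↔ X * psComp A A = A - X := by
    rw [psComp_eq_subst _ h0, psComp_eq_subst _ h0,
      ← coe_substAlgHom (HasSubst.of_constantCoeff_zero' h0), map_add, map_one]
    constructor <;> intro h <;> linear_combination -h
  rw [← hA]
  constructor
  · rintro rfl
    exact hB
  · exact eq_of_eq_X_mul_psComp hB

/-- For `A` with zero constant term and linear coefficient `1`, if `B` is the
compositional inverse of `x/(1+A(x))`, then `B = A` iff `A(A(x)) = (A(x)-x)/x`. -/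
theorem revertReciprocal_fixed_iff_eigenseries (A B : PowerSeries ℚ)
    (h0 : PowerSeries.constantCoeff A = 0) (h1 : PowerSeries.coeff 1 A = 1)
    (hBl : psComp B (PowerSeries.X * (1 + A)⁻¹) = PowerSeries.X)
    (hBr : psComp (PowerSeries.X * (1 + A)⁻¹) B = PowerSeries.X) :
    B = A ↔ PowerSeries.X * psComp A A = A - PowerSeries.X :=
  revertReciprocal_fixed_iff_eigenseries_general A B h0 hBl hBr
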